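/- Let R be a PVMD and let A and B be nonzero ideals of R such that (A+B)_t = R. Then (A ∩ B)_t = (AB)_t. -/

import Mathlib

/-!
Common definitions: star operations (`v`- and `t`-closure), `t`-ideals, `t`-invertibility,
PVMDs, overrings, `t`-linked and `t`-flat overrings, localizations inside the quotient
field, Nagata and Kaplansky transforms, endomorphism rings of ideals.
-/

open scoped Classical

namespace PVMDPaper

noncomputable section

section Generic

variable (A : Type*) [CommRing A] (K : Type*) [Field K] [Algebra A K]

/-- The image of an integral ideal of `A` inside the field `K`, as an `A`-submodule of `K`. -/
def toK (I : Ideal A) : Submodule A K := Submodule.map (Algebra.linearMap A K) I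

variable {A K}

/-- The dual `I⁻¹ = (A : I) = {x ∈ K : x I ⊆ A}` of a submodule of `K`. -/
def dual (I : Submodule A K) : Submodule A K := 1 / I

/-- The `v`-closure `I_v = (I⁻¹)⁻¹`. -/
def vOp (I : Submodule A K) : Submodule A K := 1 / (1 / I)

/-- The `t`-closure `I_t`: the union of `J_v` where `J` ranges over the nonzero finitely
generated submodules `J ≤ I` (the union of this directed family is its supremum). -/
def tOp (I : Submodule A K) : Submodule A K :=
  sSup {V | ∃ J : Submodule A K, J ≠ ⊥ ∧ J.FG ∧ J ≤ I ∧ V = vOp J}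

variable (K)

/-- An (integral) ideal `I` of `A` is a `t`-ideal if `I = I_t`. -/
def IsTIdeal (I : Ideal A) : Prop := tOp (toK A K I) = toK A K I

/-- An ideal `I` is `t`-invertible if `(I I⁻¹)_t = A`. -/
def IsTInvertible (I : Ideal A) : Prop := tOp (toK A K I * dual (toK A K I)) = 1

/-- A `t`-maximal ideal: an ideal maximal in the set of proper integral `t`-ideals. -/
def IsTMaximal (M : Ideal A) : Prop :=
  M ≠ ⊤ ∧ IsTIdeal K M ∧ ∀ J : Ideal A, J ≠ ⊤ → IsTIdeal K J → M ≤ J → J = M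

variable (A)

/-- `A` is a Prüfer `v`-multiplication domain: every nonzero finitely generated ideal
is `t`-invertible. -/
def IsPVMD : Prop := ∀ I : Ideal A, I ≠ ⊥ → I.FG → IsTInvertible K I

/-- `Spec_t(A)` is Noetherian: the ascending chain condition on radical `t`-ideals. -/
def TSpecNoetherian : Prop :=
  ∀ f : ℕ →o Ideal A, (∀ n, IsTIdeal K (f n) ∧ (f n).radical = f n) →
    ∃ n, ∀ m, n ≤ m → f m = f n

variable {A K}

/-- A submodule of `K` is a subring of `K` iff it contains `1` and is closed under
multiplication (being an additive subgroup already). -/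
def IsSubringOf (S : Submodule A K) : Prop :=
  (1 : K) ∈ S ∧ ∀ x ∈ S, ∀ y ∈ S, x * y ∈ S

variable (K)

/-- The localization `A_P = {a/s : a ∈ A, s ∈ A ∖ P}` viewed as a subset of `K`. -/
def loc (P : Ideal A) : Set K :=
  {x | ∃ a s : A, s ∉ P ∧ x * algebraMap A K s = algebraMap A K a}

/-- The set `J A_P = {a/s : a ∈ J, s ∈ A ∖ P} ⊆ K`. -/
def locIdealAt (J P : Ideal A) : Set K :=
  {x | ∃ a ∈ J, ∃ s : A, s ∉ P ∧ x * algebraMap A K s = algebraMap A K a}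

/-- `Z(A, I)`: the set of zero divisors on `A/I`. -/
def ZSet (I : Ideal A) : Set A := {x | ∃ a : A, a ∉ I ∧ x * a ∈ I}

/-- `Q` is a maximal prime ideal of `Z(A,I)`: a prime contained in `Z(A,I)`, maximal
(under inclusion) among the primes contained in `Z(A,I)`. -/
def MaxPrimeOfZ (I Q : Ideal A) : Prop :=
  Q.IsPrime ∧ (Q : Set A) ⊆ ZSet I ∧
    ∀ Q' : Ideal A, Q'.IsPrime → (Q' : Set A) ⊆ ZSet I → Q ≤ Q' → Q' = Q

end Generic

section Overring

variable {R : Type*} [CommRing R] [IsDomain R]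
variable {K : Type*} [Field K] [Algebra R K] [IsFractionRing R K]

/-- The extension `IT` of an ideal `I` of `R` to an overring `T`, as a `T`-submodule of `K`. -/
def extendI (I : Ideal R) (T : Subalgebra R K) : Submodule T K :=
  Submodule.span T (algebraMap R K '' (I : Set R))

/-- The extension `IT` of an `R`-submodule `I` of `K` to an overring `T`. -/
def extendS (I : Submodule R K) (T : Subalgebra R K) : Submodule T K :=
  Submodule.span T (I : Set K)

/-- An overring `T` of `R` is `t`-linked over `R` if `(IT)⁻¹ = T` for each finitely
generated ideal `I` of `R` with `I⁻¹ = R`. -/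
def IsTLinked (T : Subalgebra R K) : Prop :=
  ∀ I : Ideal R, I.FG → dual (toK R K I) = 1 → dual (extendI I T) = 1

/-- An overring `T` of `R` is `t`-flat over `R` if `T_M = R_{M ∩ R}` for each
`t`-maximal ideal `M` of `T`. -/
def IsTFlat (T : Subalgebra R K) : Prop :=
  ∀ M : Ideal T, IsTMaximal K M → loc K M = loc K (M.comap (algebraMap R T))

variable (R K)

/-- `R` is a `tQR`-domain: a PVMD all of whose `t`-linked overrings are localizations
of `R` at multiplicative sets. -/
def IsTQR : Prop :=
  IsPVMD R K ∧ ∀ T : Subalgebra R K, IsTLinked T → ∃ S : Submonoid R,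
    (T : Set K) = {x | ∃ a : R, ∃ s ∈ S, x * algebraMap R K s = algebraMap R K a}

variable {R K}
variable (K)

/-- The endomorphism ring `(I : I) = {x ∈ K : x I ⊆ I}` of an ideal `I`, as an
overring of `R`. -/
def endoRing (I : Ideal R) : Subalgebra R K where
  carrier := {x : K | ∀ y ∈ toK R K I, x * y ∈ toK R K I}
  mul_mem' := by
    intro a b ha hb y hy
    rw [mul_assoc]
    exact ha _ (hb _ hy)
  one_mem' := by
    intro y hy
    rwa [one_mul]
  add_mem' := by
    intro a b ha hb y hy
    rw [add_mul]
    exact Submodule.add_mem _ (ha y hy) (hb y hy)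
  zero_mem' := by
    intro y hy
    rw [zero_mul]
    exact Submodule.zero_mem _
  algebraMap_mem' := by
    intro r y hy
    rw [← Algebra.smul_def]
    exact Submodule.smul_mem _ r hy

set_option synthInstance.maxHeartbeats 400000 in
/-- The ideal `I`, viewed as an ideal of its endomorphism ring `(I : I)`. -/
def idealInEndo (I : Ideal R) : Ideal (endoRing K I) where
  carrier := {x | (x : K) ∈ toK R K I}
  add_mem' := by
    intro a b ha hb
    simp only [Set.mem_setOf_eq] at *
    rw [AddMemClass.coe_add]
    exact Submodule.add_mem _ ha hb
  zero_mem' := by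
    simp only [Set.mem_setOf_eq, ZeroMemClass.coe_zero]
    exact Submodule.zero_mem _
  smul_mem' := by
    intro c x hx
    simp only [Set.mem_setOf_eq] at *
    rw [smul_eq_mul, MulMemClass.coe_mul]
    exact c.2 _ hx

/-- The Kaplansky transform `Ω(I) = {u ∈ K : ∀ a ∈ I, ∃ n ≥ 1, u aⁿ ∈ R}`, as an
overring of `R`. -/
def kaplansky (I : Ideal R) : Subalgebra R K where
  carrier := {u : K | ∀ a ∈ I, ∃ n : ℕ, 0 < n ∧
    ∃ r : R, u * (algebraMap R K a) ^ n = algebraMap R K r}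
  mul_mem' := by
    intro u v hu hv a ha
    obtain ⟨n, hn, r, hr⟩ := hu a ha
    obtain ⟨m, hm, s, hs⟩ := hv a ha
    refine ⟨n + m, by omega, r * s, ?_⟩
    rw [map_mul, ← hr, ← hs, pow_add]
    ring
  one_mem' := by
    intro a ha
    exact ⟨1, one_pos, a, by rw [pow_one, one_mul]⟩
  add_mem' := by
    intro u v hu hv a ha
    obtain ⟨n, hn, r, hr⟩ := hu a ha
    obtain ⟨m, hm, s, hs⟩ := hv a ha
    refine ⟨n + m, by omega, r * a ^ m + s * a ^ n, ?_⟩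
    rw [map_add, map_mul, map_mul, map_pow, map_pow, ← hr, ← hs, pow_add, add_mul]
    ring
  zero_mem' := by
    intro a ha
    exact ⟨1, one_pos, 0, by rw [map_zero, zero_mul]⟩
  algebraMap_mem' := by
    intro r a ha
    exact ⟨1, one_pos, r * a, by rw [map_mul, pow_one]⟩

/-- The Nagata (ideal) transform `T(I) = ⋃_{n ≥ 1} (R : Iⁿ)`, as an overring of `R`. -/
def nagata (I : Ideal R) : Subalgebra R K where
  carrier := {x : K | ∃ n : ℕ, ∀ y ∈ I ^ (n + 1),
    ∃ r : R, x * algebraMap R K y = algebraMap R K r}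
  mul_mem' := by
    intro x x' hx hx'
    obtain ⟨n, hn⟩ := hx
    obtain ⟨m, hm⟩ := hx'
    refine ⟨n + m + 1, fun y hy => ?_⟩
    rw [show n + m + 1 + 1 = (n + 1) + (m + 1) by omega, pow_add] at hy
    refine Submodule.mul_induction_on hy ?_ ?_
    · intro a ha b hb
      obtain ⟨r, hr⟩ := hn a ha
      obtain ⟨s, hs⟩ := hm b hb
      refine ⟨r * s, ?_⟩
      rw [map_mul, map_mul, ← hr, ← hs]
      ring
    · rintro y1 y2 ⟨r1, h1⟩ ⟨r2, h2⟩
      exact ⟨r1 + r2, by rw [map_add, map_add, mul_add, h1, h2]⟩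
  one_mem' := ⟨0, fun y _ => ⟨y, by rw [one_mul]⟩⟩
  add_mem' := by
    intro x x' hx hx'
    obtain ⟨n, hn⟩ := hx
    obtain ⟨m, hm⟩ := hx'
    refine ⟨n + m + 1, fun y hy => ?_⟩
    have h1 : y ∈ I ^ (n + 1) := Ideal.pow_le_pow_right (by omega) hy
    have h2 : y ∈ I ^ (m + 1) := Ideal.pow_le_pow_right (by omega) hy
    obtain ⟨r, hr⟩ := hn y h1
    obtain ⟨s, hs⟩ := hm y h2
    exact ⟨r + s, by rw [map_add, add_mul, hr, hs]⟩
  zero_mem' := ⟨0, fun y _ => ⟨0, by rw [map_zero, zero_mul]⟩⟩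
  algebraMap_mem' := by
    intro r
    exact ⟨0, fun y _ => ⟨r * y, by rw [map_mul]⟩⟩

end Overring

/-!
Since `(A ∩ B)(A + B) ⊆ AB`, it suffices that the `t`-closure is submultiplicative,
`I_t J_t ⊆ (IJ)_t`: then `(A ∩ B)_t = (A ∩ B)_t (A + B)_t ⊆ ((A ∩ B)(A + B))_t ⊆ (AB)_t`.
Submultiplicativity reduces to the same property of the `v`-closure, because every nonzero
element of `I_t` already lies in `J_v` for a single finitely generated `J ≤ I`.
-/

section Closures

variable {A : Type*} [CommRing A] {K : Type*} [Field K] [Algebra A K]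

lemma one_div_le_one_div_of_le {I J : Submodule A K} (h : I ≤ J) :
    (1 : Submodule A K) / J ≤ 1 / I :=
  Submodule.le_div_iff.2 fun _ hx _ hy => hx _ (h hy)

lemma vOp_mono {I J : Submodule A K} (h : I ≤ J) : vOp I ≤ vOp J :=
  one_div_le_one_div_of_le (one_div_le_one_div_of_le h)

lemma mul_vOp_le_one {X J : Submodule A K} (h : X * J ≤ 1) : X * vOp J ≤ 1 :=
  (mul_le_mul' (Submodule.le_div_iff_mul_le.2 h) le_rfl).trans Submodule.mul_one_div_le_one

lemma vOp_mul_vOp_le (I J : Submodule A K) : vOp I * vOp J ≤ vOp (I * J) := by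
  refine Submodule.le_div_iff_mul_le.2 ?_
  set Z := (1 : Submodule A K) / (I * J)
  have hZ : Z * J * I ≤ 1 := by
    rw [mul_assoc, mul_comm J]
    exact Submodule.mul_one_div_le_one.trans_eq' (mul_comm _ _)
  have hZ' : Z * vOp I * J ≤ 1 := by
    rw [mul_right_comm]
    exact mul_vOp_le_one hZ
  calc vOp I * vOp J * Z = Z * vOp I * vOp J := by ac_rfl
    _ ≤ 1 := mul_vOp_le_one hZ'

lemma vOp_le_tOp {I J : Submodule A K} (hJ : J ≠ ⊥) (hJfg : J.FG) (hJI : J ≤ I) :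
    vOp J ≤ tOp I :=
  le_sSup ⟨J, hJ, hJfg, hJI, rfl⟩

lemma tOp_mono {I J : Submodule A K} (h : I ≤ J) : tOp I ≤ tOp J :=
  sSup_le_sSup fun _ ⟨J', hJ', hfg, hle, hV⟩ => ⟨J', hJ', hfg, hle.trans h, hV⟩

lemma exists_fg_of_mem_tOp {I : Submodule A K} {x : K} (hx : x ∈ tOp I) (hx0 : x ≠ 0) :
    ∃ J : Submodule A K, J ≠ ⊥ ∧ J.FG ∧ J ≤ I ∧ x ∈ vOp J := by
  set S := {V | ∃ J : Submodule A K, J ≠ ⊥ ∧ J.FG ∧ J ≤ I ∧ V = vOp J}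
  have hdir : DirectedOn (· ≤ ·) S := by
    rintro _ ⟨J₁, hJ₁, hfg₁, hle₁, rfl⟩ _ ⟨J₂, -, hfg₂, hle₂, rfl⟩
    refine ⟨vOp (J₁ ⊔ J₂), ⟨J₁ ⊔ J₂, ?_, hfg₁.sup hfg₂, sup_le hle₁ hle₂, rfl⟩,
      vOp_mono le_sup_left, vOp_mono le_sup_right⟩
    exact fun h => hJ₁ (eq_bot_mono le_sup_left h)
  change x ∈ sSup S at hx
  rcases S.eq_empty_or_nonempty with hS | hS
  · rw [hS, sSup_empty, Submodule.mem_bot] at hx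
    exact absurd hx hx0
  obtain ⟨_, ⟨J, hJ, hfg, hle, rfl⟩, hxJ⟩ := (Submodule.mem_sSup_of_directed hS hdir).1 hx
  exact ⟨J, hJ, hfg, hle, hxJ⟩

lemma tOp_mul_tOp_le (I J : Submodule A K) : tOp I * tOp J ≤ tOp (I * J) := by
  refine Submodule.mul_le.2 fun x hx y hy => ?_
  rcases eq_or_ne x 0 with rfl | hx0
  · simp
  rcases eq_or_ne y 0 with rfl | hy0
  · simp
  obtain ⟨I₀, hI₀, hfgI, hleI, hxI⟩ := exists_fg_of_mem_tOp hx hx0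
  obtain ⟨J₀, hJ₀, hfgJ, hleJ, hyJ⟩ := exists_fg_of_mem_tOp hy hy0
  have hne : I₀ * J₀ ≠ ⊥ := by simp [Submodule.mul_eq_bot, hI₀, hJ₀]
  exact vOp_le_tOp hne (hfgI.mul hfgJ) (mul_le_mul' hleI hleJ)
    (vOp_mul_vOp_le I₀ J₀ (Submodule.mul_mem_mul hxI hyJ))

lemma toK_mul (I J : Ideal A) : toK A K (I * J) = toK A K I * toK A K J :=
  Submodule.map_mul I J (Algebra.ofId A K)

end Closures

lemma Ideal.inf_mul_sup_le_mul {R : Type*} [CommRing R] (I J : Ideal R) :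
    (I ⊓ J) * (I ⊔ J) ≤ I * J := by
  rw [Ideal.mul_sup]
  exact sup_le ((Ideal.mul_mono_left inf_le_right).trans_eq (mul_comm J I))
    (Ideal.mul_mono_left inf_le_left)

section Statements

variable {R : Type*} [CommRing R] [IsDomain R]
variable {K : Type*} [Field K] [Algebra R K] [IsFractionRing R K]

theorem statement_8_general (A B : Ideal R)
    (h : tOp (toK R K (A + B)) = 1) :
    tOp (toK R K (A ⊓ B)) = tOp (toK R K (A * B)) := by
  refine le_antisymm ?_ (tOp_mono (Submodule.map_mono Ideal.mul_le_inf))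
  calc tOp (toK R K (A ⊓ B))
      = tOp (toK R K (A ⊓ B)) * tOp (toK R K (A + B)) := by rw [h, mul_one]
    _ ≤ tOp (toK R K (A ⊓ B) * toK R K (A + B)) := tOp_mul_tOp_le _ _
    _ = tOp (toK R K ((A ⊓ B) * (A ⊔ B))) := by rw [toK_mul]; rfl
    _ ≤ tOp (toK R K (A * B)) := tOp_mono (Submodule.map_mono (Ideal.inf_mul_sup_le_mul A B))

/-- Let `R` be a PVMD and `A`, `B` nonzero ideals of `R` with
`(A + B)_t = R`. Then `(A ∩ B)_t = (AB)_t`. -/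
theorem statement_8 (hR : IsPVMD R K) (A B : Ideal R) (hA : A ≠ ⊥) (hB : B ≠ ⊥)
    (h : tOp (toK R K (A + B)) = 1) :
    tOp (toK R K (A ⊓ B)) = tOp (toK R K (A * B)) :=
  statement_8_general A B h

end Statements

end

end PVMDPaper
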